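/- Let (G,P) be a network of manifolds. Then there is a linear interconnection map I : ∏_{a∈G₀} Control(P I(a) → P(a)) → Γ(T(PG)) uniquely characterized by the property that for every vertex a and every tuple w = (w_b)_{b∈G₀}, the a-component of the vector field I(w) at a point x ∈ PG equals w_a evaluated at Pξ_a(x); i.e. D(Pι_a) ∘ I(w) = w_a ∘ Pξ_a. -/

import Mathlib

/-- A finite directed multigraph. -/
structure NetGraph where
  V : Type
  E : Type
  [fV : Fintype V]
  [fE : Fintype E]
  [dV : DecidableEq V]
  [dE : DecidableEq E]
  s : E → V
  t : E → V

attribute [instance] NetGraph.fV NetGraph.fE NetGraph.dV NetGraph.dE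

/-- A map of directed graphs. -/
@[ext]
structure GraphHom (G G' : NetGraph) where
  vmap : G.V → G'.V
  emap : G.E → G'.E
  src : ∀ e, vmap (G.s e) = G'.s (emap e)
  tgt : ∀ e, vmap (G.t e) = G'.t (emap e)

/-- Identity graph map. -/
def GraphHom.id (G : NetGraph) : GraphHom G G :=
  ⟨fun a => a, fun e => e, fun _ => rfl, fun _ => rfl⟩

/-- Composition of graph maps. -/
def GraphHom.comp {G G' G'' : NetGraph} (ψ : GraphHom G' G'') (φ : GraphHom G G') :
    GraphHom G G'' :=
  ⟨fun a => ψ.vmap (φ.vmap a), fun e => ψ.emap (φ.emap e),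
   fun e => (congrArg ψ.vmap (φ.src e)).trans (ψ.src _),
   fun e => (congrArg ψ.vmap (φ.tgt e)).trans (ψ.tgt _)⟩

/-- The map on total phase spaces induced by a graph map (`ℙφ`),
given a phase space function `P'` on the codomain graph; the phase space
function on the domain is `P' ∘ φ.vmap`. -/
def Pmap {G G' : NetGraph} (P' : G'.V → Type _) (φ : GraphHom G G') :
    (∀ a' : G'.V, P' a') → ∀ a : G.V, P' (φ.vmap a) :=
  fun x a => x (φ.vmap a)

/-- The input tree `I(a)` of a vertex `a`: vertices are `a` (the `Sum.inl` vertex)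
together with the edges of `G` targeting `a`; edges are the pairs `(a, γ)` with
`t γ = a`, going from `γ` to `a`. -/
@[reducible] def NetGraph.inputTree (G : NetGraph) (a : G.V) : NetGraph where
  V := Unit ⊕ {e : G.E // G.t e = a}
  E := {e : G.E // G.t e = a}
  s := fun e => Sum.inr e
  t := fun _ => Sum.inl ()

/-- The canonical graph map `ξ_a : I(a) → G`. -/
def NetGraph.xi (G : NetGraph) (a : G.V) : GraphHom (G.inputTree a) G where
  vmap := fun v => match v with
    | Sum.inl _ => a
    | Sum.inr e => G.s e.1
  emap := fun e => e.1
  src := fun _ => rfl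
  tgt := fun e => e.2.symm

/-- The graph with a single vertex and no edges. -/
def singleGraph : NetGraph where
  V := Unit
  E := Empty
  s := Empty.elim
  t := Empty.elim

/-- The inclusion `ι_a : {a} → G`. -/
def NetGraph.iota (G : NetGraph) (a : G.V) : GraphHom singleGraph G :=
  ⟨fun _ => a, Empty.elim, fun e => e.elim, fun e => e.elim⟩

/-- The inclusion `j_a : {a} → I(a)`. -/
def NetGraph.jmap (G : NetGraph) (a : G.V) : GraphHom singleGraph (G.inputTree a) :=
  ⟨fun _ => Sum.inl (), Empty.elim, fun e => e.elim, fun e => e.elim⟩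

/-- The induced map of input trees `φ_a : I(a) → I(φ(a))`. -/
def GraphHom.inputHom {G G' : NetGraph} (φ : GraphHom G G') (a : G.V) :
    GraphHom (G.inputTree a) (G'.inputTree (φ.vmap a)) where
  vmap := fun v => match v with
    | Sum.inl _ => Sum.inl ()
    | Sum.inr e => Sum.inr ⟨φ.emap e.1, by rw [← φ.tgt, e.2]⟩
  emap := fun e => ⟨φ.emap e.1, by rw [← φ.tgt, e.2]⟩
  src := fun _ => rfl
  tgt := fun _ => rfl

/-- A graph fibration: for every vertex `a` of `G` and every edge `e'` of `G'`
ending at `φ(a)` there is a unique edge `e` of `G` ending at `a` with `φ(e) = e'`. -/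
def IsFibration {G G' : NetGraph} (φ : GraphHom G G') : Prop :=
  ∀ (a : G.V) (e' : G'.E), G'.t e' = φ.vmap a →
    ∃! e : G.E, G.t e = a ∧ φ.emap e = e'

open Manifold Topology

/-!
The interconnection map sends `w` to the vector field `x ↦ (w_a (ℙξ_a x))_a`. On a product
manifold the differential of the projection `ℙι_a` is the coordinate projection of tangent vectors,
so this field satisfies the characterization, and any field satisfying it has the same coordinates.
For smoothness, the coordinate changes of the tangent bundle of a product act coordinatewise;
hence a section of `T(ℙG)` is smooth as soon as each of its coordinates, read in `T P(a)`, is, and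
the `a`-th coordinate here is the smooth open system `w_a` composed with the smooth map `ℙξ_a`.
-/

section PiManifold

open Set Bundle

variable {𝕜 : Type*} [NontriviallyNormedField 𝕜] {ι : Type*} [Fintype ι]
  {E : ι → Type*} [∀ i, NormedAddCommGroup (E i)] [∀ i, NormedSpace 𝕜 (E i)]
  {H : ι → Type*} [∀ i, TopologicalSpace (H i)]
  {I : ∀ i, ModelWithCorners 𝕜 (E i) (H i)}
  {M : ι → Type*} [∀ i, TopologicalSpace (M i)] [∀ i, ChartedSpace (H i) (M i)]
  {n : WithTop ℕ∞}

theorem writtenInExtChartAt_apply_pi (i : ι) (x : ∀ j, M j) :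
    writtenInExtChartAt (ModelWithCorners.pi I) (I i) x (fun y => y i)
      =ᶠ[𝓝[range (ModelWithCorners.pi I)] extChartAt (ModelWithCorners.pi I) x x]
        fun z => z i := by
  filter_upwards [extChartAt_target_mem_nhdsWithin (I := ModelWithCorners.pi I) x] with z hz
  exact congrFun ((extChartAt (ModelWithCorners.pi I) x).right_inv hz) i

theorem contMDiff_apply_pi (i : ι) :
    ContMDiff (ModelWithCorners.pi I) (I i) n (fun x : ∀ j, M j => x i) := by
  intro x
  have h := writtenInExtChartAt_apply_pi (I := I) i x
  rw [contMDiffAt_iff]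
  exact ⟨(continuous_apply i).continuousAt,
    (ContinuousLinearMap.proj (R := 𝕜) (φ := E) i).contDiff.contDiffWithinAt
      |>.congr_of_eventuallyEq h (h.eq_of_nhdsWithin (mem_range_self _))⟩

theorem contMDiffAt_pi_of_apply {F : Type*} [NormedAddCommGroup F] [NormedSpace 𝕜 F]
    {G : Type*} [TopologicalSpace G] {J : ModelWithCorners 𝕜 F G}
    {N : Type*} [TopologicalSpace N] [ChartedSpace G N] {f : N → ∀ i, M i} {x : N}
    (h : ∀ i, ContMDiffAt J (I i) n (fun y => f y i) x) :
    ContMDiffAt J (ModelWithCorners.pi I) n f x := by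
  simp only [contMDiffAt_iff] at h ⊢
  exact ⟨continuousAt_pi.2 fun i => (h i).1, contDiffWithinAt_pi.2 fun i => (h i).2⟩

theorem hasMFDerivAt_apply_pi (i : ι) (x : ∀ j, M j) :
    HasMFDerivAt (ModelWithCorners.pi I) (I i) (fun y => y i) x
      (ContinuousLinearMap.proj (R := 𝕜) (φ := E) i) := by
  have h := writtenInExtChartAt_apply_pi (I := I) i x
  exact ⟨(continuous_apply i).continuousAt,
    (hasFDerivWithinAt_apply i _ _).congr_of_eventuallyEq h
      (h.eq_of_nhdsWithin (mem_range_self _))⟩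

theorem mfderiv_apply_pi (i : ι) (x : ∀ j, M j) (v : ∀ j, E j) :
    mfderiv (ModelWithCorners.pi I) (I i) (fun y => y i) x v = v i := by
  rw [(hasMFDerivAt_apply_pi i x).mfderiv]
  rfl

theorem mem_extChartAt_pi_source {x z : ∀ i, M i} :
    z ∈ (extChartAt (ModelWithCorners.pi I) x).source ↔
      ∀ i, z i ∈ (extChartAt (I i) (x i)).source := by
  simp

theorem tangentCoordChange_pi [∀ i, IsManifold (I i) 1 (M i)]
    [IsManifold (ModelWithCorners.pi I) 1 (∀ i, M i)] {x y z : ∀ i, M i}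
    (hz : ∀ i, z i ∈ (extChartAt (I i) (x i)).source ∩ (extChartAt (I i) (y i)).source)
    (v : ∀ i, E i) :
    tangentCoordChange (ModelWithCorners.pi I) x y z v =
      fun i => tangentCoordChange (I i) (x i) (y i) (z i) (v i) := by
  have hz' : z ∈ (extChartAt (ModelWithCorners.pi I) x).source ∩
      (extChartAt (ModelWithCorners.pi I) y).source :=
    ⟨mem_extChartAt_pi_source.2 fun i => (hz i).1, mem_extChartAt_pi_source.2 fun i => (hz i).2⟩
  have hpi : HasFDerivWithinAt
      (extChartAt (ModelWithCorners.pi I) y ∘ (extChartAt (ModelWithCorners.pi I) x).symm)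
      (ContinuousLinearMap.pi fun i =>
        (tangentCoordChange (I i) (x i) (y i) (z i)).comp (ContinuousLinearMap.proj i))
      (range (ModelWithCorners.pi I)) (extChartAt (ModelWithCorners.pi I) x z) := by
    refine hasFDerivWithinAt_pi'' fun i => ?_
    rw [ContinuousLinearMap.proj_pi]
    have hmaps :
        MapsTo (fun w : ∀ j, E j => w i) (range (ModelWithCorners.pi I)) (range (I i)) := by
      rintro _ ⟨w, rfl⟩
      exact mem_range_self _
    -- the extended charts of a product manifold are the products of extended charts
    have hcomp : (fun w => (extChartAt (ModelWithCorners.pi I) y ∘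
        (extChartAt (ModelWithCorners.pi I) x).symm) w i) =
        (extChartAt (I i) (y i) ∘ (extChartAt (I i) (x i)).symm) ∘ fun w : ∀ j, E j => w i := by
      rfl
    have hpt : extChartAt (ModelWithCorners.pi I) x z i = extChartAt (I i) (x i) (z i) := rfl
    rw [hcomp]
    have hg := hasFDerivWithinAt_tangentCoordChange (hz i)
    rw [← hpt] at hg
    exact hg.comp (extChartAt _ x z) (hasFDerivWithinAt_apply (𝕜 := 𝕜) i _ _) hmaps
  rw [(ModelWithCorners.pi I).uniqueDiffWithinAt_image.eq
    (hasFDerivWithinAt_tangentCoordChange hz') hpi]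
  rfl

theorem contMDiff_tangentBundle_section_pi [∀ i, IsManifold (I i) 1 (M i)]
    [IsManifold (ModelWithCorners.pi I) 1 (∀ i, M i)] {X : (∀ i, M i) → ∀ i, E i}
    (h : ∀ i, ContMDiff (ModelWithCorners.pi I) (I i).tangent n
      fun x => (⟨x i, X x i⟩ : TangentBundle (I i) (M i))) :
    ContMDiff (ModelWithCorners.pi I) (ModelWithCorners.pi I).tangent n
      fun x => (⟨x, X x⟩ : TangentBundle (ModelWithCorners.pi I) (∀ i, M i)) := by
  intro x₀
  refine (contMDiffAt_section x₀).2 <| contMDiffAt_pi_space.2 fun i => ?_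
  refine (contMDiffAt_totalSpace.1 (h i x₀)).2.congr_of_eventuallyEq ?_
  filter_upwards [extChartAt_source_mem_nhds (I := ModelWithCorners.pi I) x₀] with x hx
  exact congrFun (tangentCoordChange_pi (fun i =>
    ⟨mem_extChartAt_source (x i), mem_extChartAt_pi_source.1 hx i⟩) (X x)) i

end PiManifold

variable (R : Type*) [Semiring R] in
def interconnection (G : NetGraph) (E : G.V → Type*) [∀ a, AddCommMonoid (E a)]
    [∀ a, Module R (E a)] (M : G.V → Type*) :
    (∀ a, ((∀ v : (G.inputTree a).V, M ((G.xi a).vmap v)) → E a)) →ₗ[R]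
      ((∀ b, M b) → ∀ a, E a) where
  toFun w x a := w a (Pmap M (G.xi a) x)
  map_add' _ _ := rfl
  map_smul' _ _ := rfl

section Network

variable {𝕜 : Type*} [NontriviallyNormedField 𝕜] {G : NetGraph}
  {E : G.V → Type*} [∀ a, NormedAddCommGroup (E a)] [∀ a, NormedSpace 𝕜 (E a)]
  {H : G.V → Type*} [∀ a, TopologicalSpace (H a)]
  {I : ∀ a, ModelWithCorners 𝕜 (E a) (H a)}
  {M : G.V → Type*} [∀ a, TopologicalSpace (M a)] [∀ a, ChartedSpace (H a) (M a)]
  {n : WithTop ℕ∞}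

theorem contMDiff_Pmap {K : NetGraph} (φ : GraphHom K G) :
    ContMDiff (ModelWithCorners.pi I) (ModelWithCorners.pi fun v => I (φ.vmap v)) n
      (Pmap M φ) :=
  fun _ => contMDiffAt_pi_of_apply fun v => (contMDiff_apply_pi (φ.vmap v)).contMDiffAt

theorem contMDiff_interconnection [∀ a, IsManifold (I a) 1 (M a)]
    [IsManifold (ModelWithCorners.pi I) 1 (∀ a, M a)]
    {w : ∀ a, (∀ v : (G.inputTree a).V, M ((G.xi a).vmap v)) → E a}
    (hw : ∀ a, ContMDiff (ModelWithCorners.pi fun v => I ((G.xi a).vmap v)) (I a).tangent n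
      fun y => (⟨y (Sum.inl ()), w a y⟩ : TangentBundle (I a) (M a))) :
    ContMDiff (ModelWithCorners.pi I) (ModelWithCorners.pi I).tangent n
      fun x => (⟨x, interconnection 𝕜 G E M w x⟩ :
        TangentBundle (ModelWithCorners.pi I) (∀ a, M a)) :=
  contMDiff_tangentBundle_section_pi fun a => (hw a).comp (contMDiff_Pmap (G.xi a))

end Network

/-- For a network of manifolds `(G,P)` there is a linear interconnection map
`𝓘 : ∏_{a} Control(ℙI(a) → P a) → Γ(T ℙG)` uniquely characterized componentwise by
`D(ℙι_a) ∘ 𝓘(w) = w_a ∘ ℙξ_a` for every vertex `a`; it sends tuples of smooth open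
systems to smooth vector fields. -/
theorem interconnection_exists_unique_linear {G : NetGraph}
    (E : G.V → Type) [∀ a, NormedAddCommGroup (E a)] [∀ a, NormedSpace ℝ (E a)]
    (H : G.V → Type) [∀ a, TopologicalSpace (H a)]
    (I : ∀ a, ModelWithCorners ℝ (E a) (H a))
    (M : G.V → Type) [∀ a, TopologicalSpace (M a)] [∀ a, ChartedSpace (H a) (M a)]
    [∀ a, IsManifold (I a) (⊤ : ℕ∞) (M a)]
    [IsManifold (ModelWithCorners.pi I) (⊤ : ℕ∞) (∀ b : G.V, M b)] :
    ∃ Int : (∀ a : G.V, ((∀ v : (G.inputTree a).V, M ((G.xi a).vmap v)) → E a))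
        →ₗ[ℝ] ((∀ b : G.V, M b) → ∀ a : G.V, E a),
      ∀ w : ∀ a : G.V, (∀ v : (G.inputTree a).V, M ((G.xi a).vmap v)) → E a,
        -- if each `w a` is a smooth open system then `Int w` is a (smooth) vector field
        ((∀ a : G.V, ContMDiff
              (ModelWithCorners.pi fun v : (G.inputTree a).V => I ((G.xi a).vmap v))
              (I a).tangent (⊤ : ℕ∞)
              (fun y => (⟨y (Sum.inl ()), w a y⟩ : TangentBundle (I a) (M a)))) →
          ContMDiff (ModelWithCorners.pi I) (ModelWithCorners.pi I).tangent (⊤ : ℕ∞)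
            (fun x => (⟨x, Int w x⟩ : TangentBundle (ModelWithCorners.pi I) (∀ b, M b)))) ∧
        -- characterization `D(ℙι_a) ∘ I(w) = w_a ∘ ℙξ_a`
        (∀ (a : G.V) (x : ∀ b : G.V, M b),
          mfderiv (ModelWithCorners.pi I) (I a) (fun y => y a) x (Int w x) =
            w a (Pmap M (G.xi a) x)) ∧
        -- uniqueness
        (∀ X : (∀ b : G.V, M b) → ∀ a : G.V, E a,
          (∀ (a : G.V) (x : ∀ b : G.V, M b),
            mfderiv (ModelWithCorners.pi I) (I a) (fun y => y a) x (X x) =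
              w a (Pmap M (G.xi a) x)) → X = Int w) := by
  refine ⟨interconnection ℝ G E M, fun w =>
    ⟨contMDiff_interconnection, fun a x => mfderiv_apply_pi a x _, fun X hX => ?_⟩⟩
  funext x a
  exact (mfderiv_apply_pi a x (X x)).symm.trans (hX a x)
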